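/- Let p and q be probability distributions on [n] with q_x > 0 for all x. If a treap is built with priorities pri_x = −⌊log₂ log₂(1/q_x)⌋ + δ_x (δ_x i.i.d. uniform on (0,1)), then the expected total cost of processing an access sequence with empirical distribution p over m accesses is O(m · Ent(p,q)) where Ent(p,q) = Σ_x p_x log(1/q_x) is the cross entropy. Consequently the extra cost compared to using the true distribution p is O(m · D_KL(p‖q)). -/

import Mathlib

/-!
Write `ℓ(y) = ⌊log₂ log₂ (1 / q_y)⌋` for the level of `y`, so that its priority is `-ℓ(y) + δ_y`.
An item `y` is an ancestor of `x` only if its priority is maximal on the interval between `x` and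
`y`. This fails almost surely as soon as that interval contains an item of smaller level, in
particular when `ℓ(y) > ℓ(x)`; otherwise `δ_y` must be the largest among the `δ`s of the items of
level `ℓ(y)` in the interval, which by exchangeability has probability at most one over their
number. Summed over the items of one level on one side of `x`, these bounds give at most a
harmonic number of the size of the level, and level `k` has at most `2^(2^(k+1))` items because
each of them has `q > 2^(-2^(k+1))`. Hence the expected depth of `x` is
`O(∑_{k ≤ ℓ(x)} 2^k) = O(2^ℓ(x)) = O(1 + log (1 / q_x))`. Weighting by the access counts gives
`O(m (1 + Ent(p,q)))`, and `Ent(p,q) = Ent(p) + D_KL(p‖q)`.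
-/

open MeasureTheory

/-- Depth of item `x` in the treap over `Fin n` with priorities `pri`. -/
noncomputable def treapDepth (n : ℕ) (pri : Fin n → ℝ) (x : Fin n) : ℕ :=
  (Finset.univ.filter fun y : Fin n =>
    ∀ z : Fin n, min x y ≤ z → z ≤ max x y → pri z ≤ pri y).card

open Finset Function ProbabilityTheory Real

theorem harmonic_mono : Monotone harmonic := fun _ _ h =>
  sum_le_sum_of_subset_of_nonneg (range_subset_range.2 h) fun _ _ _ => by positivity

section Ranks

variable {α : Type*} [LinearOrder α]

theorem sum_inv_card_filter_le_eq_harmonic (s : Finset α) :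
    ∑ y ∈ s, ((#(s.filter (· ≤ y)) : ℚ))⁻¹ = harmonic #s := by
  induction s using Finset.induction_on_max with
  | empty => simp
  | insert a s hlt ih =>
    have ha : a ∉ s := fun h => (hlt a h).false
    have hfilter (y : α) (hy : y ∈ s) : (insert a s).filter (· ≤ y) = s.filter (· ≤ y) := by
      rw [filter_insert, if_neg (hlt y hy).not_ge]
    have htop : (insert a s).filter (· ≤ a) = insert a s :=
      filter_true_of_mem fun z hz => (mem_insert.1 hz).elim le_of_eq fun h => (hlt z h).le
    rw [sum_insert ha, htop, Finset.sum_congr rfl fun y hy => by rw [hfilter y hy], ih,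
      card_insert_of_notMem ha, harmonic_succ, add_comm]

theorem sum_inv_card_le_harmonic_of_le (s : Finset α) (T : α → Finset α)
    (hT : ∀ y ∈ s, s.filter (· ≤ y) ⊆ T y) :
    ∑ y ∈ s, ((#(T y) : ℝ))⁻¹ ≤ harmonic #s := by
  calc ∑ y ∈ s, ((#(T y) : ℝ))⁻¹ ≤ ∑ y ∈ s, ((#(s.filter (· ≤ y)) : ℝ))⁻¹ := by
        refine sum_le_sum fun y hy => inv_anti₀ ?_ (by exact_mod_cast card_le_card (hT y hy))
        exact_mod_cast card_pos.2 ⟨y, by simp [hy]⟩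
    _ = harmonic #s := by rw [← sum_inv_card_filter_le_eq_harmonic s]; push_cast; rfl

theorem sum_inv_card_le_harmonic_of_ge (s : Finset α) (T : α → Finset α)
    (hT : ∀ y ∈ s, s.filter (y ≤ ·) ⊆ T y) :
    ∑ y ∈ s, ((#(T y) : ℝ))⁻¹ ≤ harmonic #s :=
  sum_inv_card_le_harmonic_of_le (α := αᵒᵈ) s T hT

theorem sum_inv_card_filter_mem_uIcc_le [LocallyFiniteOrder α] (S : Finset α) (x : α) :
    ∑ y ∈ S, ((#(S.filter (· ∈ uIcc x y)) : ℝ))⁻¹ ≤ 2 * harmonic #S := by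
  rw [← sum_filter_add_sum_filter_not S (x ≤ ·)]
  have hright := sum_inv_card_le_harmonic_of_le (S.filter (x ≤ ·))
    (fun y => S.filter (· ∈ uIcc x y)) fun y hy z hz => by
      simp only [mem_filter] at hy hz ⊢
      exact ⟨hz.1.1, mem_uIcc.2 ⟨inf_le_left.trans hz.1.2, hz.2.trans le_sup_right⟩⟩
  have hleft := sum_inv_card_le_harmonic_of_ge (S.filter (¬ x ≤ ·))
    (fun y => S.filter (· ∈ uIcc x y)) fun y hy z hz => by
      simp only [mem_filter, not_le] at hy hz ⊢
      exact ⟨hz.1.1, mem_uIcc.2 ⟨inf_le_right.trans hz.2, hz.1.2.le.trans le_sup_left⟩⟩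
  have hmono (p : α → Prop) [DecidablePred p] : (harmonic #(S.filter p) : ℝ) ≤ harmonic #S := by
    exact_mod_cast harmonic_mono (card_filter_le S p)
  linarith [hmono (x ≤ ·), hmono (¬ x ≤ ·)]

end Ranks

namespace MeasureTheory.Measure

variable {ι : Type*} [Fintype ι] {ν : Measure ℝ} [IsProbabilityMeasure ν]

theorem pi_setOf_apply_eq_apply_eq_zero [NullSingletonClass ν] {a b : ι} (hab : a ≠ b) :
    Measure.pi (fun _ : ι => ν) {δ | δ a = δ b} = 0 := by
  set μ := Measure.pi fun _ : ι => ν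
  have hindep : IndepFun (fun δ : ι → ℝ => δ a) (fun δ => δ b) μ :=
    (iIndepFun_pi (X := fun _ => id) fun _ => aemeasurable_id).indepFun hab
  have hlaw : μ.map (fun δ => (δ a, δ b)) = ν.prod ν := by
    rw [(indepFun_iff_map_prod_eq_prod_map_map (measurable_pi_apply a).aemeasurable
        (measurable_pi_apply b).aemeasurable).1 hindep,
      (measurePreserving_eval _ a).map_eq, (measurePreserving_eval _ b).map_eq]
  have hdiag : ν.prod ν (Set.diagonal ℝ) = 0 := by
    rw [Measure.prod_apply measurableSet_diagonal]
    simp [Set.preimage, Set.diagonal]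
  calc μ {δ | δ a = δ b} = μ.map (fun δ => (δ a, δ b)) (Set.diagonal ℝ) := by
        rw [Measure.map_apply (by fun_prop) measurableSet_diagonal]; rfl
    _ = 0 := by rw [hlaw, hdiag]

theorem pi_preimage_comp_swap [DecidableEq ι] (a b : ι) {E : Set (ι → ℝ)} (hE : MeasurableSet E) :
    Measure.pi (fun _ : ι => ν) ((fun δ => δ ∘ Equiv.swap a b) ⁻¹' E) =
      Measure.pi (fun _ : ι => ν) E := by
  have h := measurePreserving_piCongrLeft (fun _ : ι => ν) (Equiv.swap a b)
  have hco : ⇑(MeasurableEquiv.piCongrLeft (fun _ : ι => ℝ) (Equiv.swap a b))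
      = fun δ : ι → ℝ => δ ∘ (Equiv.swap a b) := by
    ext δ i
    simp [MeasurableEquiv.coe_piCongrLeft, Equiv.piCongrLeft_apply_eq_cast]
  rw [← hco]
  exact h.measure_preimage hE.nullMeasurableSet

theorem pi_real_forall_le_le_inv_card [NullSingletonClass ν] [DecidableEq ι] {T : Finset ι}
    {w : ι} (hw : w ∈ T) :
    (Measure.pi fun _ : ι => ν).real {δ | ∀ z ∈ T, δ z ≤ δ w} ≤ (#T : ℝ)⁻¹ := by
  set μ := Measure.pi fun _ : ι => ν
  set E : ι → Set (ι → ℝ) := fun v => {δ | ∀ z ∈ T, δ z ≤ δ v}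
  have hmeas (v : ι) : MeasurableSet (E v) := by
    simp only [E, Set.ofPred_forall]
    exact .biInter T.countable_toSet fun z _ =>
      measurableSet_le (measurable_pi_apply z) (measurable_pi_apply v)
  have hswap_mem {v : ι} (hv : v ∈ T) {z : ι} (hz : z ∈ T) : Equiv.swap v w z ∈ T := by
    rw [Equiv.swap_apply_def]; split_ifs <;> assumption
  have hequal {v : ι} (hv : v ∈ T) : μ.real (E v) = μ.real (E w) := by
    have hpre : (fun δ => δ ∘ Equiv.swap v w) ⁻¹' E w = E v := by
      ext δ
      simp only [E, Set.mem_preimage, Set.mem_ofPred_eq, Function.comp_apply,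
        Equiv.swap_apply_right]
      refine ⟨fun h z hz => ?_, fun h z hz => h _ (hswap_mem hv hz)⟩
      simpa using h _ (hswap_mem hv hz)
    rw [measureReal_def, measureReal_def, ← hpre, pi_preimage_comp_swap v w (hmeas w)]
  have hdisj : Set.Pairwise (T : Set ι) (AEDisjoint μ on E) := by
    intro v hv v' hv' hne
    refine measure_mono_null (fun δ hδ => ?_) (pi_setOf_apply_eq_apply_eq_zero hne)
    exact le_antisymm (hδ.2 v hv) (hδ.1 v' hv')
  have hsum : ∑ v ∈ T, μ.real (E v) ≤ 1 := by
    rw [← measureReal_biUnion_finset₀ hdisj fun v _ => (hmeas v).nullMeasurableSet]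
    exact measureReal_le_one
  rw [Finset.sum_congr rfl fun v hv => hequal hv, sum_const, nsmul_eq_mul] at hsum
  have hT : (0 : ℝ) < #T := by exact_mod_cast card_pos.2 ⟨w, hw⟩
  rwa [← one_div, le_div_iff₀' hT]

end MeasureTheory.Measure

instance : IsProbabilityMeasure (volume.restrict (Set.Icc (0 : ℝ) 1)) := ⟨by simp⟩

noncomputable def level {ι : Type*} (q : ι → ℝ) (y : ι) : ℤ :=
  ⌊logb 2 (logb 2 (1 / q y))⌋

section Level

variable {ι : Type*} {q : ι → ℝ}

theorem inv_two_pow_two_pow_lt_of_level_lt {z : ι} (hq : 0 < q z) {j : ℤ} (h : level q z < j) :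
    ((2 : ℝ) ^ 2 ^ j.toNat)⁻¹ < q z := by
  have hpow : (1 : ℝ) < 2 ^ 2 ^ j.toNat := one_lt_pow₀ one_lt_two (by positivity)
  rw [inv_lt_comm₀ (by positivity) hq, ← one_div]
  rcases le_or_gt (logb 2 (1 / q z)) 0 with hu | hu
  · exact ((logb_nonpos_iff one_lt_two (by positivity)).1 hu).trans_lt hpow
  have hlog : logb 2 (logb 2 (1 / q z)) < j.toNat :=
    (Int.floor_lt.1 h).trans_le (by exact_mod_cast Int.self_le_toNat j)
  rw [logb_lt_iff_lt_rpow one_lt_two hu, rpow_natCast] at hlog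
  rw [logb_lt_iff_lt_rpow one_lt_two (by positivity)] at hlog
  exact_mod_cast hlog

theorem two_pow_level_le {x : ι} (hq : 0 < q x) (hq1 : q x ≤ 1) (hl : 0 ≤ level q x) :
    (2 : ℝ) ^ (level q x).toNat ≤ 1 + logb 2 (1 / q x) := by
  have hu : 0 ≤ logb 2 (1 / q x) := logb_nonneg one_lt_two (by rw [le_div_iff₀ hq]; linarith)
  rcases hu.eq_or_lt with hu | hu
  · -- `q x = 1`: then `logb 2 0 = 0` puts `x` at level `0`.
    have h0 : level q x = 0 := by rw [level, ← hu, logb_zero, Int.floor_zero]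
    rw [h0, ← hu]
    norm_num
  have hL : ((level q x).toNat : ℝ) ≤ logb 2 (logb 2 (1 / q x)) := by
    calc ((level q x).toNat : ℝ) = (((level q x).toNat : ℤ) : ℝ) := by norm_cast
      _ = level q x := by rw [Int.toNat_of_nonneg hl]
      _ ≤ _ := Int.floor_le _
  rw [le_logb_iff_rpow_le one_lt_two hu, rpow_natCast] at hL
  linarith

variable [Fintype ι]

theorem card_filter_level_lt_le (hq : ∀ z, 0 < q z) (hq1 : ∑ z, q z = 1) (j : ℤ) :
    (#(univ.filter (level q · < j)) : ℝ) ≤ 2 ^ 2 ^ j.toNat := by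
  have hsum := card_nsmul_le_sum (univ.filter (level q · < j)) q _
    fun z hz => (inv_two_pow_two_pow_lt_of_level_lt (hq z) (mem_filter.1 hz).2).le
  have htotal : ∑ z ∈ univ.filter (level q · < j), q z ≤ 1 :=
    hq1 ▸ sum_le_sum_of_subset_of_nonneg (subset_univ _) fun z _ _ => (hq z).le
  rw [nsmul_eq_mul, ← div_eq_mul_inv, div_le_iff₀ (by positivity)] at hsum
  exact hsum.trans (mul_le_of_le_one_left (by positivity) htotal)

theorem harmonic_card_level_eq_le (hq : ∀ z, 0 < q z) (hq1 : ∑ z, q z = 1) (k : ℕ) :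
    (harmonic #(univ.filter (level q · = k)) : ℝ) ≤ 1 + 2 ^ (k + 1) * log 2 := by
  set J := #(univ.filter (level q · = k))
  have hJ : (J : ℝ) ≤ 2 ^ 2 ^ (k + 1) := by
    have hsub : univ.filter (level q · = k) ⊆ univ.filter (level q · < (k + 1 : ℕ)) :=
      monotone_filter_right _ fun z hz => by push_cast; omega
    simpa using (Nat.cast_le.2 (card_le_card hsub)).trans (card_filter_level_lt_le hq hq1 _)
  have hlog : log J ≤ 2 ^ (k + 1) * log 2 := by
    rcases Nat.eq_zero_or_pos J with h | h
    · rw [h, Nat.cast_zero, log_zero]; positivity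
    · calc log J ≤ log (2 ^ 2 ^ (k + 1)) := log_le_log (by exact_mod_cast h) hJ
        _ = 2 ^ (k + 1) * log 2 := by rw [log_pow]; push_cast; ring
  linarith [harmonic_le_one_add_log J]

end Level

theorem sum_range_two_mul_one_add_two_pow_mul_log_two_le {L : ℕ} {ℓ : ℝ} (hℓ : 0 ≤ ℓ)
    (hL : (2 : ℝ) ^ L ≤ 1 + ℓ / log 2) :
    ∑ k ∈ range (L + 1), 2 * (1 + 2 ^ (k + 1) * log 2) ≤ 10 + 11 * ℓ := by
  have hlog2 : 0.69 < log 2 := lt_trans (by norm_num) log_two_gt_d9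
  have hlog2' : log 2 < 0.7 := lt_trans log_two_lt_d9 (by norm_num)
  have hgeom : ∑ k ∈ range (L + 1), 2 * (1 + 2 ^ (k + 1) * log 2) =
      2 * (L + 1) + 4 * log 2 * (2 ^ (L + 1) - 1) := by
    simp only [mul_add, mul_one, sum_add_distrib, pow_succ, ← sum_mul, ← mul_sum,
      geom_sum_eq (by norm_num : (2 : ℝ) ≠ 1)]
    simp
    ring
  have hL1 : (L : ℝ) + 1 ≤ 2 ^ L := by exact_mod_cast Nat.lt_two_pow_self
  have ht : ℓ / log 2 ≤ 3 / 2 * ℓ := by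
    rw [div_le_iff₀ (by positivity)]; nlinarith
  have hA : (2 : ℝ) ^ L * log 2 ≤ log 2 + ℓ := by
    have := mul_le_mul_of_nonneg_right hL (by positivity : 0 ≤ log 2)
    rwa [add_mul, one_mul, div_mul_cancel₀ _ (by positivity)] at this
  rw [hgeom, pow_succ]
  nlinarith

namespace Treap

variable {n : ℕ}

def ancestorEvent (c : Fin n → ℝ) (x y : Fin n) : Set (Fin n → ℝ) :=
  {δ | ∀ z ∈ uIcc x y, c z + δ z ≤ c y + δ y}

theorem measurableSet_ancestorEvent (c : Fin n → ℝ) (x y : Fin n) :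
    MeasurableSet (ancestorEvent c x y) := by
  simp only [ancestorEvent, Set.ofPred_forall]
  exact .biInter (uIcc x y).countable_toSet fun z _ => measurableSet_le (by fun_prop) (by fun_prop)

theorem integral_treapDepth (μ : Measure (Fin n → ℝ)) [IsFiniteMeasure μ] (c : Fin n → ℝ)
    (x : Fin n) :
    ∫ δ, (treapDepth n (fun y => c y + δ y) x : ℝ) ∂μ = ∑ y, μ.real (ancestorEvent c x y) := by
  have hdepth (δ : Fin n → ℝ) : (treapDepth n (fun y => c y + δ y) x : ℝ) =
      ∑ y, (ancestorEvent c x y).indicator 1 δ := by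
    simp only [treapDepth, card_filter, Nat.cast_sum, Nat.cast_ite, Nat.cast_one, Nat.cast_zero,
      Set.indicator_apply, ancestorEvent, mem_uIcc, Set.mem_ofPred_eq, Pi.one_apply, and_imp]
  simp_rw [hdepth]
  rw [integral_finsetSum _ fun y _ =>
    (integrable_const 1).indicator (measurableSet_ancestorEvent c x y)]
  exact Finset.sum_congr rfl fun y _ => integral_indicator_one (measurableSet_ancestorEvent c x y)

variable {ν : Measure ℝ} [IsProbabilityMeasure ν]

theorem pi_real_ancestorEvent_eq_zero (hν : ∀ᵐ t ∂ν, t ∈ Set.Ico (0 : ℝ) 1) (c : Fin n → ℝ)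
    {x y z : Fin n} (hz : z ∈ uIcc x y) (hc : c y + 1 ≤ c z) :
    (Measure.pi fun _ => ν).real (ancestorEvent c x y) = 0 := by
  have hz' := (Measure.quasiMeasurePreserving_eval (fun _ : Fin n => ν) z).ae hν
  have hy' := (Measure.quasiMeasurePreserving_eval (fun _ : Fin n => ν) y).ae hν
  rw [measureReal_eq_zero_iff, measure_eq_zero_iff_ae_notMem]
  filter_upwards [hz', hy'] with δ hδz hδy hA
  linarith [hA z hz, hδz.1, hδy.2]

theorem pi_real_ancestorEvent_le_inv_card [NullSingletonClass ν] (c : Fin n → ℝ) (x y : Fin n) :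
    (Measure.pi fun _ => ν).real (ancestorEvent c x y) ≤
      (#((uIcc x y).filter (c · = c y)) : ℝ)⁻¹ := by
  refine le_trans (measureReal_mono ?_)
    (Measure.pi_real_forall_le_le_inv_card (mem_filter.2 ⟨right_mem_uIcc, rfl⟩))
  intro δ hδ z hz
  obtain ⟨hz, hcz⟩ := mem_filter.1 hz
  linarith [hδ z hz]

theorem sum_pi_real_ancestorEvent_filter_eq_le [NullSingletonClass ν] (c : Fin n → ℝ)
    (x : Fin n) (r : ℝ) :
    ∑ y ∈ univ.filter (c · = r), (Measure.pi fun _ => ν).real (ancestorEvent c x y) ≤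
      2 * harmonic #(univ.filter (c · = r)) := by
  set S := univ.filter (c · = r)
  calc ∑ y ∈ S, (Measure.pi fun _ => ν).real (ancestorEvent c x y)
      ≤ ∑ y ∈ S, (#(S.filter (· ∈ uIcc x y)) : ℝ)⁻¹ := by
        refine sum_le_sum fun y hy => (pi_real_ancestorEvent_le_inv_card c x y).trans_eq ?_
        have hy : c y = r := (mem_filter.1 hy).2
        congr 3
        ext z
        simp [S, hy, and_comm]
    _ ≤ 2 * harmonic #S := sum_inv_card_filter_mem_uIcc_le S x

variable {q : Fin n → ℝ}

theorem sum_pi_real_ancestorEvent_level_nonneg_le [NullSingletonClass ν]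
    (hν : ∀ᵐ t ∂ν, t ∈ Set.Ico (0 : ℝ) 1) (hq : ∀ z, 0 < q z) (hq1 : ∑ z, q z = 1) (x : Fin n) :
    ∑ y ∈ univ.filter (0 ≤ level q ·),
        (Measure.pi fun _ => ν).real (ancestorEvent (fun y => -(level q y : ℝ)) x y) ≤
      ∑ k ∈ range (level q x + 1).toNat, 2 * (1 + 2 ^ (k + 1) * log 2) := by
  set P : Fin n → ℝ := fun y =>
    (Measure.pi fun _ => ν).real (ancestorEvent (fun y => -(level q y : ℝ)) x y)
  have hP_zero {y : Fin n} (hy : P y ≠ 0) : level q y ≤ level q x := by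
    by_contra! h
    refine hy (pi_real_ancestorEvent_eq_zero hν _ left_mem_uIcc ?_)
    have : (level q x : ℝ) + 1 ≤ level q y := by exact_mod_cast h
    linarith
  have hmaps : ∀ y ∈ (univ.filter (0 ≤ level q ·)).filter (level q · ≤ level q x),
      (level q y).toNat ∈ range (level q x + 1).toNat := by
    intro y hy
    simp only [mem_filter, mem_univ, true_and] at hy
    simp only [mem_range]
    omega
  rw [← sum_filter_of_ne fun y _ hy => hP_zero hy, ← sum_fiberwise_of_maps_to hmaps]
  refine sum_le_sum fun k _ => ?_
  have hfiber : ((univ.filter (0 ≤ level q ·)).filter (level q · ≤ level q x)).filter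
      (fun y => (level q y).toNat = k) ⊆ univ.filter (fun y => -(level q y : ℝ) = -(k : ℝ)) := by
    intro y hy
    simp only [mem_filter, mem_univ, true_and] at hy ⊢
    have : level q y = k := by omega
    simp [this]
  have hlevel :
      univ.filter (fun y => -(level q y : ℝ) = -(k : ℝ)) = univ.filter (level q · = k) := by
    ext y; simp only [mem_filter, mem_univ, true_and, neg_inj]; norm_cast
  calc _ ≤ ∑ y ∈ univ.filter (fun y => -(level q y : ℝ) = -(k : ℝ)), P y :=
        sum_le_sum_of_subset_of_nonneg hfiber fun _ _ _ => measureReal_nonneg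
    _ ≤ 2 * harmonic #(univ.filter (fun y => -(level q y : ℝ) = -(k : ℝ))) :=
        sum_pi_real_ancestorEvent_filter_eq_le _ x _
    _ ≤ 2 * (1 + 2 ^ (k + 1) * log 2) := by
        rw [hlevel]; linarith [harmonic_card_level_eq_le hq hq1 k]

theorem sum_pi_real_ancestorEvent_level_le [NullSingletonClass ν]
    (hν : ∀ᵐ t ∂ν, t ∈ Set.Ico (0 : ℝ) 1) (hq : ∀ z, 0 < q z) (hq1 : ∑ z, q z = 1) (x : Fin n) :
    ∑ y, (Measure.pi fun _ => ν).real (ancestorEvent (fun y => -(level q y : ℝ)) x y) ≤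
      12 * (1 + log (1 / q x)) := by
  have hqx : q x ≤ 1 := hq1 ▸ single_le_sum (fun z _ => (hq z).le) (mem_univ x)
  have hℓ : 0 ≤ log (1 / q x) := log_nonneg (by rw [le_div_iff₀ (hq x)]; linarith)
  have hneg : ∑ y ∈ univ.filter (¬ 0 ≤ level q ·),
      (Measure.pi fun _ => ν).real (ancestorEvent (fun y => -(level q y : ℝ)) x y) ≤ 2 := by
    have hcard : (#(univ.filter (¬ 0 ≤ level q ·)) : ℝ) ≤ 2 := by
      simpa [not_le] using card_filter_level_lt_le hq hq1 0
    refine (sum_le_card_nsmul _ _ 1 fun y _ => measureReal_le_one).trans ?_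
    simpa using hcard
  rw [← sum_filter_add_sum_filter_not univ (0 ≤ level q ·)]
  have hnonneg := sum_pi_real_ancestorEvent_level_nonneg_le hν hq hq1 x
  rcases lt_or_ge (level q x) 0 with hx | hx
  · rw [show (level q x + 1).toNat = 0 by omega, sum_range_zero] at hnonneg
    linarith
  · have hL := two_pow_level_le (hq x) hqx hx
    rw [show (level q x + 1).toNat = (level q x).toNat + 1 by omega] at hnonneg
    rw [logb] at hL
    linarith [sum_range_two_mul_one_add_two_pow_mul_log_two_le hℓ hL]

theorem integral_treapDepth_level_le (hq : ∀ z, 0 < q z) (hq1 : ∑ z, q z = 1) (x : Fin n) :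
    ∫ δ, (treapDepth n (fun y => -(level q y : ℝ) + δ y) x : ℝ)
        ∂(Measure.pi fun _ => volume.restrict (Set.Icc (0 : ℝ) 1)) ≤
      12 * (1 + log (1 / q x)) := by
  have hν : ∀ᵐ t ∂volume.restrict (Set.Icc (0 : ℝ) 1), t ∈ Set.Ico (0 : ℝ) 1 := by
    filter_upwards [ae_restrict_mem measurableSet_Icc, Measure.ae_ne _ 1] with t ht ht1
    exact ⟨ht.1, ht.2.lt_of_ne ht1⟩
  rw [integral_treapDepth]
  exact sum_pi_real_ancestorEvent_level_le hν hq hq1 x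

theorem sum_mul_integral_treapDepth_level_le (hq : ∀ z, 0 < q z) (hq1 : ∑ z, q z = 1)
    {w : Fin n → ℝ} (hw : ∀ x, 0 ≤ w x) :
    ∑ x, w x * ∫ δ, (treapDepth n (fun y => -(level q y : ℝ) + δ y) x : ℝ)
        ∂(Measure.pi fun _ => volume.restrict (Set.Icc (0 : ℝ) 1)) ≤
      12 * (∑ x, w x + ∑ x, w x * log (1 / q x)) := by
  rw [← sum_add_distrib, mul_sum]
  exact sum_le_sum fun x _ => by
    nlinarith [integral_treapDepth_level_le hq hq1 x, hw x]

end Treap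

/-- Building the treap from predicted probabilities `q` (priorities
`pri_x = −⌊log₂ log₂(1/q_x)⌋ + δ_x`, `δ_x` i.i.d. uniform on `(0,1)`) and processing `m`
accesses whose empirical distribution is `p` (`p_x = f_x/m`), the expected total cost is
`O(m·Ent(p,q))` where `Ent(p,q) = ∑_x p_x log(1/q_x)`; consequently it is
`O(m·Ent(p) + m·D_KL(p‖q))`, i.e., the extra cost over using `p` is `O(m·D_KL(p‖q))`. -/
theorem stmt6 : ∃ c : ℝ, 0 < c ∧
    ∀ (n m : ℕ) (f : Fin n → ℕ) (q : Fin n → ℝ),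
      (∀ x, 1 ≤ f x) → (∑ x, f x) = m →
      (∀ x, 0 < q x) → (∑ x, q x) = 1 →
      ((∑ x : Fin n, (f x : ℝ) *
            ∫ δ : Fin n → ℝ,
              (treapDepth n
                (fun y => -((⌊Real.logb 2 (Real.logb 2 (1 / q y))⌋ : ℤ) : ℝ) + δ y) x : ℝ)
              ∂(Measure.pi fun _ : Fin n => volume.restrict (Set.Icc (0 : ℝ) 1)))
          ≤ c * (m : ℝ) * (1 + ∑ x : Fin n, ((f x : ℝ) / m) * Real.log (1 / q x)))
      ∧ ((∑ x : Fin n, (f x : ℝ) *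
            ∫ δ : Fin n → ℝ,
              (treapDepth n
                (fun y => -((⌊Real.logb 2 (Real.logb 2 (1 / q y))⌋ : ℤ) : ℝ) + δ y) x : ℝ)
              ∂(Measure.pi fun _ : Fin n => volume.restrict (Set.Icc (0 : ℝ) 1)))
          ≤ c * ((m : ℝ) * (1 + ∑ x : Fin n, ((f x : ℝ) / m) * Real.log ((m : ℝ) / (f x : ℝ)))
              + (m : ℝ) * ∑ x : Fin n, ((f x : ℝ) / m) * Real.log (((f x : ℝ) / m) / q x))) := by
  refine ⟨12, by norm_num, fun n m f q hf hm hq hq1 => ?_⟩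
  have hfpos (x : Fin n) : (0 : ℝ) < f x := by exact_mod_cast hf x
  have hmpos (x : Fin n) : (0 : ℝ) < m := by
    exact (hfpos x).trans_le (by exact_mod_cast hm ▸ single_le_sum (by simp) (mem_univ x))
  have hterm (x : Fin n) (a : ℝ) : (m : ℝ) * ((f x : ℝ) / m * a) = f x * a := by
    field_simp [(hmpos x).ne']
  have hcost := Treap.sum_mul_integral_treapDepth_level_le hq hq1 fun x => (hfpos x).le
  rw [← Nat.cast_sum, hm] at hcost
  have hcross : (m : ℝ) * (1 + ∑ x, (f x : ℝ) / m * log (1 / q x)) =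
      m + ∑ x, (f x : ℝ) * log (1 / q x) := by
    rw [mul_add, mul_one, mul_sum]
    exact congrArg _ (sum_congr rfl fun x _ => hterm x _)
  have hkl : (m : ℝ) * (1 + ∑ x, (f x : ℝ) / m * log (m / f x)) +
      m * ∑ x, (f x : ℝ) / m * log (f x / m / q x) = m + ∑ x, (f x : ℝ) * log (1 / q x) := by
    rw [mul_add, mul_one, mul_sum, mul_sum, add_assoc, ← sum_add_distrib]
    refine congrArg _ (sum_congr rfl fun x _ => ?_)
    have hf0 := (hfpos x).ne'
    have hm0 := (hmpos x).ne'
    rw [hterm, hterm, ← mul_add, ← log_mul (by positivity) (by simp [hf0, hm0, (hq x).ne'])]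
    field_simp
  exact ⟨by rw [mul_assoc, hcross]; exact hcost, by rw [hkl]; exact hcost⟩
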